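/- arXiv:1801.08639 — 2 statements merged into one kernel-verified Lean document; each statement's English description precedes it below -/
import Mathlib

section
/- Let r ≥ 1 and λ̃ ≥ 1 be integers, λ = rλ̃ − r + 1, and let v ∈ ℝ^λ be the ΣΔ condensation vector. For any positive integer p, set m = pλ, let V = I_p ⊗ v ∈ ℝ^{p×m}, Ṽ = (9/(8‖v‖₂√p))·V, and let D ∈ ℝ^{m×m} be the first-order difference matrix. Then ‖ṼD^r‖_{∞→2} ≤ (8r)^{r+1}·λ^{−r+1/2}. -/
open scoped BigOperators
noncomputable section

/-- The ΣΔ condensation vector: the `j`-th entry (0-indexed) is the coefficient of `z^j`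
in the polynomial `(1 + z + ⋯ + z^(lamt-1))^r`. -/
def sdVec (r lamt : ℕ) {lam : ℕ} : Fin lam → ℝ :=
  fun j => ((∑ t ∈ Finset.range lamt, (Polynomial.X : Polynomial ℝ) ^ t) ^ r).coeff (j : ℕ)

/-- Block-diagonal matrix `I_p ⊗ v` with `p` copies of the row vector `v` on the diagonal. -/
def kronRow (p : ℕ) {lam : ℕ} (v : Fin lam → ℝ) : Matrix (Fin p) (Fin (p * lam)) ℝ :=
  Matrix.of fun i j =>
    if (j : ℕ) / lam = (i : ℕ) then
      (if h2 : (j : ℕ) % lam < lam then v ⟨(j : ℕ) % lam, h2⟩ else 0)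
    else 0

/-- The `m×m` first-order difference matrix. -/
def diffMat (m : ℕ) : Matrix (Fin m) (Fin m) ℝ :=
  Matrix.of fun i j =>
    if (i : ℕ) = (j : ℕ) then 1 else if (i : ℕ) = (j : ℕ) + 1 then -1 else 0

/-- `ℓ¹` norm of a real vector. -/
def norm1 {n : ℕ} (x : Fin n → ℝ) : ℝ := ∑ j, |x j|

/-- Euclidean norm of a real vector. -/
def norm2 {n : ℕ} (x : Fin n → ℝ) : ℝ := Real.sqrt (∑ j, (x j) ^ 2)

/-- `ℓ∞` norm of a real vector. -/
def normInf {n : ℕ} (x : Fin n → ℝ) : ℝ := ⨆ j, |x j|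

/-- The `∞ → 2` operator norm `‖M‖_{∞→2} = sup {‖Mx‖₂ : ‖x‖_∞ ≤ 1}`. -/
def opNormInf2 {p m : ℕ} (M : Matrix (Fin p) (Fin m) ℝ) : ℝ :=
  sSup {c : ℝ | ∃ x : Fin m → ℝ, normInf x ≤ 1 ∧ c = norm2 (M.mulVec x)}

/-! Row `i` of `V` lists the coefficients of `P = (1 + z + ⋯ + z^(λ̃-1))^r` starting at column
`iλ`, and multiplying a row vector on the right by `D` multiplies its generating polynomial by
`z - 1` up to a shift by one column (the support never reaches the last column). So row `i` of `V D^r` is a window of the coefficients of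
`(z - 1)^r P = (z^λ̃ - 1)^r`, whose `ℓ¹` norm is at most `2^r`; hence
`‖V D^r x‖₂ ≤ √p 2^r ‖x‖_∞`. On the other side Cauchy–Schwarz gives
`‖v‖₂ ≥ ‖v‖₁ / √λ = P(1) / √λ = λ̃^r / √λ`, and `λ ≤ rλ̃` turns the resulting bound
`9 · 2^r √λ / (8 λ̃^r)` into `(8r)^(r+1) λ^(-r+1/2)`. -/

open Polynomial Finset

def intCoeff {R : Type*} [Semiring R] (f : R[X]) (d : ℤ) : R :=
  if 0 ≤ d then f.coeff d.toNat else 0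

section intCoeff

variable {R : Type*}

theorem intCoeff_of_neg [Semiring R] (f : R[X]) {d : ℤ} (hd : d < 0) : intCoeff f d = 0 :=
  if_neg (not_le.mpr hd)

theorem intCoeff_natCast [Semiring R] (f : R[X]) (n : ℕ) : intCoeff f n = f.coeff n := by
  simp [intCoeff]

theorem intCoeff_eq_zero_of_natDegree_lt [Semiring R] {f : R[X]} {d : ℤ}
    (hd : (f.natDegree : ℤ) < d) : intCoeff f d = 0 := by
  rw [intCoeff, if_pos (by omega)]
  exact coeff_eq_zero_of_natDegree_lt (by omega)

theorem intCoeff_one [Semiring R] (d : ℤ) : intCoeff (1 : R[X]) d = if d = 0 then 1 else 0 := by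
  simp only [intCoeff, coeff_one]
  split_ifs <;> first | rfl | omega

theorem intCoeff_sub [Ring R] (f g : R[X]) (d : ℤ) :
    intCoeff (f - g) d = intCoeff f d - intCoeff g d := by
  simp only [intCoeff, coeff_sub]
  split_ifs <;> simp

theorem intCoeff_X_pow_mul [Semiring R] (f : R[X]) (n : ℕ) (d : ℤ) :
    intCoeff (X ^ n * f) d = intCoeff f (d - n) := by
  simp only [intCoeff, coeff_X_pow_mul']
  split_ifs <;> first | rfl | omega | congr 1; omega

theorem intCoeff_X_sub_one_mul [Ring R] (f : R[X]) (d : ℤ) :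
    intCoeff ((X - 1) * f) d = intCoeff f (d - 1) - intCoeff f d := by
  rw [sub_mul, one_mul, ← pow_one X, intCoeff_sub, intCoeff_X_pow_mul, Nat.cast_one]

end intCoeff

theorem sum_abs_intCoeff_X_pow_sub_one_pow_le {R : Type*} [CommRing R] [LinearOrder R]
    [IsStrictOrderedRing R] (m n r : ℕ) (a : ℤ) :
    ∑ j : Fin m, |intCoeff ((X ^ n - 1 : R[X]) ^ r) (j - a)| ≤ 2 ^ r := by
  induction r generalizing a with
  | zero =>
    simp only [pow_zero, intCoeff_one, sub_eq_zero, apply_ite, abs_one, abs_zero,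
      sum_boole, Nat.cast_le_one]
    refine card_le_one.mpr fun j hj k hk ↦ Fin.ext ?_
    simp only [mem_filter, mem_univ, true_and] at hj hk
    omega
  | succ r ih =>
    calc ∑ j : Fin m, |intCoeff ((X ^ n - 1 : R[X]) ^ (r + 1)) (j - a)|
        ≤ ∑ j : Fin m, (|intCoeff ((X ^ n - 1 : R[X]) ^ r) (j - (a + n))|
            + |intCoeff ((X ^ n - 1 : R[X]) ^ r) (j - a)|) := by
          gcongr with j
          rw [pow_succ', sub_mul, one_mul, intCoeff_sub, intCoeff_X_pow_mul, sub_sub]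
          exact abs_sub _ _
      _ ≤ 2 ^ r + 2 ^ r := by rw [sum_add_distrib]; exact add_le_add (ih _) (ih _)
      _ = 2 ^ (r + 1) := by ring

theorem sum_mul_diffMat_apply {m : ℕ} (g : ℤ → ℝ) (hg : g m = 0) (j : Fin m) :
    ∑ k : Fin m, g k * diffMat m k j = g j - g (j + 1) := by
  have hsplit : ∀ k : ℕ, g k * (if k = j then 1 else if k = j + 1 then -1 else 0)
      = (if (j : ℕ) = k then g k else 0) - (if (j : ℕ) + 1 = k then g k else 0) := by
    intro k
    split_ifs <;> first | omega | ring
  simp only [diffMat, Matrix.of_apply]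
  rw [Fin.sum_univ_eq_sum_range (fun k ↦ g k * if k = j then 1 else if k = j + 1 then -1 else 0)]
  simp only [hsplit, sum_sub_distrib, sum_ite_eq, mem_range, if_pos j.isLt]
  by_cases hj : (j : ℕ) + 1 < m
  · rw [if_pos hj, Nat.cast_succ]
  · rw [if_neg hj, show (j : ℤ) + 1 = m by omega, hg]

theorem kronRow_coeff_apply {p lam : ℕ} (P : ℝ[X]) (hP : P.natDegree < lam)
    (i : Fin p) (j : Fin (p * lam)) :
    kronRow p (fun k : Fin lam ↦ P.coeff k) i j = intCoeff P (j - i * lam) := by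
  have hlam : 0 < lam := by omega
  simp only [kronRow, Matrix.of_apply, dif_pos (Nat.mod_lt _ hlam)]
  have hdiv := Nat.div_add_mod (j : ℕ) lam
  have hmod := Nat.mod_lt (j : ℕ) hlam
  generalize (j : ℕ) / lam = q at hdiv ⊢
  generalize (j : ℕ) % lam = t at hdiv hmod ⊢
  split_ifs with hqi
  · rw [← hqi, show ((j : ℕ) : ℤ) - (q : ℕ) * lam = t by rw [← hdiv]; push_cast; ring,
      intCoeff_natCast]
  · rcases Nat.lt_or_gt_of_ne hqi with hlt | hgt
    · refine (intCoeff_of_neg _ ?_).symm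
      have := Nat.mul_le_mul_left lam hlt
      zify at *
      nlinarith
    · refine (intCoeff_eq_zero_of_natDegree_lt ?_).symm
      have := Nat.mul_le_mul_left lam hgt
      zify at *
      nlinarith

theorem kronRow_coeff_mul_diffMat_pow_apply {p lam : ℕ} (P : ℝ[X]) (hP : P.natDegree < lam)
    (s : ℕ) (i : Fin p) (j : Fin (p * lam)) :
    (kronRow p (fun k : Fin lam ↦ P.coeff k) * diffMat (p * lam) ^ s) i j
      = intCoeff ((X - 1) ^ s * P) (j - (i * lam - s)) := by
  induction s generalizing j with
  | zero => simp [kronRow_coeff_apply P hP]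
  | succ s ih =>
    have hX : (X - 1 : ℝ[X]).natDegree ≤ 1 := by simpa using natDegree_X_sub_C_le (1 : ℝ)
    have hdeg : ((X - 1 : ℝ[X]) ^ s * P).natDegree ≤ s * 1 + P.natDegree :=
      natDegree_mul_le.trans (Nat.add_le_add_right (natDegree_pow_le_of_le s hX) _)
    have hvanish : intCoeff ((X - 1) ^ s * P) ((p * lam : ℕ) - (i * lam - s)) = 0 := by
      apply intCoeff_eq_zero_of_natDegree_lt
      have := Nat.mul_le_mul_right lam i.isLt
      zify at *
      nlinarith
    rw [pow_succ, ← Matrix.mul_assoc, Matrix.mul_apply]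
    simp only [ih]
    rw [sum_mul_diffMat_apply (fun k ↦ intCoeff ((X - 1) ^ s * P) (k - (i * lam - s))) hvanish,
      pow_succ', mul_assoc, intCoeff_X_sub_one_mul]
    push_cast
    ring_nf

theorem abs_le_normInf {n : ℕ} (x : Fin n → ℝ) (j : Fin n) : |x j| ≤ normInf x :=
  le_ciSup (f := fun j ↦ |x j|) (Set.finite_range _).bddAbove j

theorem norm2_le_sqrt_mul_of_abs_le {n : ℕ} {x : Fin n → ℝ} {C : ℝ} (hC : 0 ≤ C)
    (hx : ∀ i, |x i| ≤ C) : norm2 x ≤ Real.sqrt n * C := by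
  calc norm2 x ≤ Real.sqrt (∑ _i : Fin n, C ^ 2) :=
        Real.sqrt_le_sqrt (sum_le_sum fun i _ ↦ sq_le_sq' (abs_le.mp (hx i)).1 (abs_le.mp (hx i)).2)
    _ = Real.sqrt n * C := by
      rw [sum_const, card_univ, Fintype.card_fin, nsmul_eq_mul, Real.sqrt_mul (Nat.cast_nonneg _),
        Real.sqrt_sq hC]

theorem opNormInf2_le_of_sum_abs_le {p m : ℕ} (M : Matrix (Fin p) (Fin m) ℝ) {C : ℝ}
    (hC : 0 ≤ C) (hM : ∀ i, ∑ j, |M i j| ≤ C) : opNormInf2 M ≤ Real.sqrt p * C := by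
  refine Real.sSup_le ?_ (by positivity)
  rintro _ ⟨x, hx, rfl⟩
  refine norm2_le_sqrt_mul_of_abs_le hC fun i ↦ ?_
  calc |M.mulVec x i| ≤ ∑ j, |M i j| * |x j| := by
        simpa only [Matrix.mulVec, dotProduct, abs_mul] using
          abs_sum_le_sum_abs (fun j ↦ M i j * x j) univ
    _ ≤ ∑ j, |M i j| := sum_le_sum fun j _ ↦
        mul_le_of_le_one_right (abs_nonneg _) ((abs_le_normInf x j).trans hx)
    _ ≤ C := hM i

theorem sum_le_norm2_mul_sqrt {n : ℕ} (x : Fin n → ℝ) : ∑ j, x j ≤ norm2 x * Real.sqrt n := by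
  have hcs := sum_mul_sq_le_sq_mul_sq univ x fun _ ↦ (1 : ℝ)
  simp only [mul_one, one_pow, sum_const, card_univ, Fintype.card_fin, nsmul_eq_mul] at hcs
  rw [norm2, ← Real.sqrt_mul (sum_nonneg fun j _ ↦ sq_nonneg _)]
  exact Real.le_sqrt_of_sq_le hcs

theorem sum_coeff_eq_eval_one {R : Type*} [Semiring R] {lam : ℕ} (P : R[X])
    (hP : P.natDegree < lam) :
    ∑ j : Fin lam, P.coeff j = P.eval 1 := by
  simp [eval_eq_sum_range' hP, Fin.sum_univ_eq_sum_range (fun j ↦ P.coeff j)]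

def sdPoly (r lamt : ℕ) : ℝ[X] :=
  (∑ t ∈ range lamt, X ^ t) ^ r

section sdPoly

variable {r lamt lam : ℕ}

theorem sdVec_eq_coeff_sdPoly :
    sdVec r lamt (lam := lam) = fun k : Fin lam ↦ (sdPoly r lamt).coeff k :=
  rfl

theorem natDegree_sdPoly_le : (sdPoly r lamt).natDegree ≤ r * lamt - r := by
  rw [← Nat.mul_sub_one]
  exact natDegree_pow_le_of_le r <| natDegree_sum_le_of_forall_le _ _ fun t ht ↦
    (natDegree_X_pow_le t).trans (Nat.le_sub_one_of_lt (mem_range.mp ht))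

theorem X_sub_one_pow_mul_sdPoly : (X - 1) ^ r * sdPoly r lamt = (X ^ lamt - 1) ^ r := by
  rw [sdPoly, ← mul_pow, mul_comm, geom_sum_mul]

theorem sum_abs_kronRow_sdVec_mul_diffMat_pow_le (hlam : r * lamt - r < lam) {p : ℕ}
    (i : Fin p) :
    ∑ j, |(kronRow p (sdVec r lamt (lam := lam)) * diffMat (p * lam) ^ r) i j| ≤ (2 : ℝ) ^ r := by
  have hdeg := natDegree_sdPoly_le.trans_lt hlam
  simp only [sdVec_eq_coeff_sdPoly, kronRow_coeff_mul_diffMat_pow_apply _ hdeg,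
    X_sub_one_pow_mul_sdPoly]
  exact sum_abs_intCoeff_X_pow_sub_one_pow_le _ _ _ _

theorem pow_le_norm2_sdVec_mul_sqrt (hlam : r * lamt - r < lam) :
    (lamt : ℝ) ^ r ≤ norm2 (sdVec r lamt (lam := lam)) * Real.sqrt lam := by
  have hsum : ∑ j, sdVec r lamt (lam := lam) j = (lamt : ℝ) ^ r := by
    rw [sdVec_eq_coeff_sdPoly, sum_coeff_eq_eval_one _ (natDegree_sdPoly_le.trans_lt hlam)]
    simp [sdPoly, eval_finsetSum]
  exact hsum ▸ sum_le_norm2_mul_sqrt _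

end sdPoly

theorem nine_mul_two_pow_mul_pow_le {r lamt lam : ℕ} (hr : 1 ≤ r) (hlam : lam ≤ r * lamt) :
    9 * 2 ^ r * (lam : ℝ) ^ r ≤ 8 * (8 * r) ^ (r + 1) * (lamt : ℝ) ^ r := by
  have hlam' : (lam : ℝ) ^ r ≤ (r : ℝ) ^ r * (lamt : ℝ) ^ r := by
    rw [← mul_pow]; gcongr; exact_mod_cast hlam
  have h2 : (9 : ℝ) * 2 ^ r ≤ 8 ^ (r + 2) := by
    have : (2 : ℝ) ^ r ≤ 8 ^ r := pow_le_pow_left₀ (by norm_num) (by norm_num) r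
    rw [pow_add]; linarith [pow_nonneg (zero_le_two : (0 : ℝ) ≤ 2) r]
  have hr' : (r : ℝ) ^ r ≤ (r : ℝ) ^ (r + 1) := pow_le_pow_right₀ (by exact_mod_cast hr) r.le_succ
  calc 9 * 2 ^ r * (lam : ℝ) ^ r ≤ 8 ^ (r + 2) * (r : ℝ) ^ (r + 1) * (lamt : ℝ) ^ r := by
        grw [hlam', ← mul_assoc, h2, hr']
    _ = 8 * (8 * r) ^ (r + 1) * (lamt : ℝ) ^ r := by ring

theorem nine_mul_two_pow_div_le {r lamt lam : ℕ} (hr : 1 ≤ r) (hlamt : 1 ≤ lamt)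
    (hlam : lam = r * lamt - r + 1) {a : ℝ} (ha : (lamt : ℝ) ^ r ≤ a * Real.sqrt lam) :
    9 * 2 ^ r / (8 * a) ≤ (8 * (r : ℝ)) ^ (r + 1) * (lam : ℝ) ^ (-(r : ℝ) + 1 / 2) := by
  have hlam0 : (0 : ℝ) < lam := by rw [hlam]; positivity
  have ha0 : 0 < a := pos_of_mul_pos_left
    ((pow_pos (by exact_mod_cast hlamt) r).trans_le ha) (Real.sqrt_nonneg _)
  rw [Real.rpow_add hlam0, Real.rpow_neg hlam0.le, Real.rpow_natCast, ← Real.sqrt_eq_rpow,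
    ← div_eq_inv_mul, ← mul_div_assoc, div_le_div_iff₀ (by positivity) (by positivity)]
  calc 9 * 2 ^ r * (lam : ℝ) ^ r ≤ 8 * (8 * r) ^ (r + 1) * (lamt : ℝ) ^ r :=
        nine_mul_two_pow_mul_pow_le hr (by have := Nat.le_mul_of_pos_right r hlamt; omega)
    _ ≤ 8 * (8 * r) ^ (r + 1) * (a * Real.sqrt lam) := by gcongr
    _ = (8 * r) ^ (r + 1) * Real.sqrt lam * (8 * a) := by ring

/-- with `v` the ΣΔ condensation vector, `V = I_p ⊗ v`,
`Ṽ = (9/(8‖v‖₂√p))·V` and `D` the first-order difference matrix,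
`‖ṼD^r‖_{∞→2} ≤ (8r)^{r+1} · λ^{-r+1/2}`. -/
theorem stmt1 (r lamt : ℕ) (hr : 1 ≤ r) (hlamt : 1 ≤ lamt)
    (lam : ℕ) (hlam : lam = r * lamt - r + 1) (p : ℕ) (hp : 0 < p)
    (v : Fin lam → ℝ) (hv : v = sdVec r lamt)
    (V : Matrix (Fin p) (Fin (p * lam)) ℝ) (hV : V = kronRow p v)
    (Vt : Matrix (Fin p) (Fin (p * lam)) ℝ)
    (hVt : Vt = (9 / (8 * norm2 v * Real.sqrt p)) • V) :
    opNormInf2 (Vt * (diffMat (p * lam)) ^ r)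
      ≤ (8 * (r : ℝ)) ^ (r + 1) * (lam : ℝ) ^ (-(r : ℝ) + 1 / 2) := by
  subst hv hV hVt
  have hlam' : r * lamt - r < lam := by omega
  have hnorm := pow_le_norm2_sdVec_mul_sqrt hlam'
  set c := 9 / (8 * norm2 (sdVec r lamt (lam := lam)) * Real.sqrt p) with hc
  have hc0 : 0 ≤ c := by rw [hc, norm2]; positivity
  calc _ ≤ Real.sqrt p * (c * 2 ^ r) := by
        rw [Matrix.smul_mul]
        refine opNormInf2_le_of_sum_abs_le _ (by positivity) fun i ↦ ?_
        simp only [Matrix.smul_apply, smul_eq_mul, abs_mul, ← mul_sum,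
          abs_of_nonneg hc0]
        exact mul_le_mul_of_nonneg_left (sum_abs_kronRow_sdVec_mul_diffMat_pow_le hlam' i) hc0
    _ = 9 * 2 ^ r / (8 * norm2 (sdVec r lamt (lam := lam))) := by
        have : 0 < Real.sqrt p := Real.sqrt_pos.mpr (by exact_mod_cast hp)
        rw [hc]
        field_simp
    _ ≤ (8 * (r : ℝ)) ^ (r + 1) * (lam : ℝ) ^ (-(r : ℝ) + 1 / 2) :=
        nine_mul_two_pow_div_le hr hlamt hlam hnorm
end
end

section
/- Let r ≥ 1 and λ̃ ≥ 1 be integers, λ = rλ̃ − r + 1, and let v ∈ ℝ^λ be the ΣΔ condensation vector. Then ‖v‖₂ ≥ λ^{r−1/2}·r^{−r}. -/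
/-!
The coefficients of `(1 + z + ⋯ + z^(λ̃-1))^r` all fit in `v` (the degree is `r(λ̃-1) < λ`),
so they sum to the value `λ̃^r` of the polynomial at `z = 1`. Cauchy–Schwarz against the
all-ones vector gives `‖v‖₂ ≥ λ̃^r / √λ`, and `λ ≤ rλ̃` gives `λ̃^r ≥ (λ/r)^r`.
-/

open scoped BigOperators
noncomputable section

open Polynomial

theorem natDegree_geomSum_pow_le {R : Type*} [Semiring R] (n r : ℕ) :
    ((∑ t ∈ Finset.range n, (X : R[X]) ^ t) ^ r).natDegree ≤ r * (n - 1) := by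
  refine natDegree_pow_le.trans (Nat.mul_le_mul_left r ?_)
  refine natDegree_sum_le_of_forall_le _ _ fun t ht => ?_
  exact (natDegree_X_pow_le t).trans (Nat.le_sub_one_of_lt (Finset.mem_range.mp ht))

theorem sum_coeff_eq_eval_one_s2 {R : Type*} [Semiring R] {p : R[X]} {m : ℕ}
    (hp : p.natDegree < m) : ∑ j : Fin m, p.coeff j = p.eval 1 := by
  simpa [Fin.sum_univ_eq_sum_range (fun j => p.coeff j)] using (eval_eq_sum_range' hp 1).symm

theorem sum_sdVec {r lamt lam : ℕ} (hlam : r * (lamt - 1) < lam) :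
    ∑ j : Fin lam, sdVec r lamt j = (lamt : ℝ) ^ r := by
  simp only [sdVec]
  rw [sum_coeff_eq_eval_one_s2 ((natDegree_geomSum_pow_le lamt r).trans_lt hlam)]
  simp [eval_pow, eval_finsetSum]

theorem sum_le_sqrt_card_mul_norm2 {n : ℕ} (x : Fin n → ℝ) :
    ∑ j, x j ≤ √n * norm2 x := by
  rw [norm2, ← Real.sqrt_mul (Nat.cast_nonneg n)]
  apply Real.le_sqrt_of_sq_le
  simpa using sq_sum_le_card_mul_sum_sq (s := Finset.univ) (f := x)

theorem rpow_sub_half_mul_rpow_neg {a b : ℕ} (ha : 0 < a) :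
    (a : ℝ) ^ ((b : ℝ) - 1 / 2) * (b : ℝ) ^ (-(b : ℝ)) = ((a : ℝ) / b) ^ b / √a := by
  have ha' : (0 : ℝ) < a := Nat.cast_pos.mpr ha
  rw [Real.rpow_sub ha', Real.rpow_neg (Nat.cast_nonneg b), Real.rpow_natCast, Real.rpow_natCast,
    ← Real.sqrt_eq_rpow, div_pow]
  ring

/-- the ΣΔ condensation vector `v ∈ ℝ^λ`, `λ = rλ̃ - r + 1`, satisfies
`‖v‖₂ ≥ λ^(r - 1/2) · r^(-r)`. -/
theorem stmt2 (r lamt : ℕ) (hr : 1 ≤ r) (hlamt : 1 ≤ lamt)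
    (lam : ℕ) (hlam : lam = r * lamt - r + 1)
    (v : Fin lam → ℝ) (hv : v = sdVec r lamt) :
    norm2 v ≥ (lam : ℝ) ^ ((r : ℝ) - 1 / 2) * (r : ℝ) ^ (-(r : ℝ)) := by
  have hdeg : r * (lamt - 1) < lam := by rw [hlam, Nat.mul_sub_one]; omega
  have hlam_le : (lam : ℝ) ≤ r * lamt := by
    have : r ≤ r * lamt := Nat.le_mul_of_pos_right r hlamt
    exact_mod_cast (show lam ≤ r * lamt by omega)
  have hsum : ∑ j, v j = (lamt : ℝ) ^ r := hv ▸ sum_sdVec hdeg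
  have hr' : (0 : ℝ) < r := Nat.cast_pos.mpr hr
  have hsqrt : 0 < √(lam : ℝ) := Real.sqrt_pos.mpr (Nat.cast_pos.mpr (by omega))
  calc (lam : ℝ) ^ ((r : ℝ) - 1 / 2) * (r : ℝ) ^ (-(r : ℝ)) = ((lam : ℝ) / r) ^ r / √lam :=
        rpow_sub_half_mul_rpow_neg (by omega)
    _ ≤ (lamt : ℝ) ^ r / √lam := by
        gcongr
        rwa [div_le_iff₀' hr']
    _ ≤ norm2 v := by
        rw [div_le_iff₀' hsqrt, ← hsum]
        exact sum_le_sqrt_card_mul_norm2 v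
end
end
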